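/- arXiv:2110.15479 — 7 statements merged into one kernel-verified Lean document; each statement's English description precedes it below -/
import Mathlib

section
/- Let d ≥ 1 and n_1, …, n_d ≥ 1, and let T be a real tensor of size n_1 × ⋯ × n_d, i.e. a map assigning a real number T_{i_1…i_d} to each index tuple. Then T is orthogonally decomposable if and only if for every q ∈ {1,…,d} the contraction T•_q T satisfies all of the following symmetries: for every ℓ ∈ {1,…,d} with ℓ ≠ q and all index tuples (i_1,…,i_{q-1},i_{q+1},…,i_d) and (j_1,…,j_{q-1},j_{q+1},…,j_d), the entry (T•_q T)_{i_1…i_{q-1}i_{q+1}…i_d j_1…j_{q-1}j_{q+1}…j_d} is unchanged when i_ℓ and j_ℓ are exchanged. -/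
open Finset

/-- A real tensor `T` of size `n 0 × ⋯ × n (d-1)` is orthogonally decomposable (odeco) if it
can be written as a sum of `r` rank-one terms `v i 0 ⊗ ⋯ ⊗ v i (d-1)` in which, for every mode
`j`, the vectors `v 0 j, …, v (r-1) j` are pairwise orthogonal in `ℝ^(n j)` with the standard
inner product. -/
def IsOdeco {d : ℕ} {n : Fin d → ℕ} (T : (∀ j : Fin d, Fin (n j)) → ℝ) : Prop :=
  ∃ (r : ℕ) (v : Fin r → ∀ j : Fin d, Fin (n j) → ℝ),
    (∀ (j : Fin d) (i i' : Fin r), i ≠ i' → (∑ a, v i j a * v i' j a) = 0) ∧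
    ∀ idx : ∀ j : Fin d, Fin (n j), T idx = ∑ i, ∏ j, v i j (idx j)

open Matrix Function

/-!
Odeco tensors have symmetric contractions because, against orthogonal factors in mode `q`,
`T •_q T = ∑ₛ ‖vₛ⁽q⁾‖² ⨂_{j ≠ q} (vₛ⁽ʲ⁾ ⊗ vₛ⁽ʲ⁾)`, and each term is symmetric.

The converse is a simultaneous singular value decomposition. Slicing `T` along its first two
modes gives matrices `A w`, indexed by the remaining indices `w`; symmetry of the contractions
along modes `0` and `1` says that all `A a (A b)ᵀ` and `(A a)ᵀ A b` are symmetric. Then the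
`A a (A b)ᵀ` commute, and in a joint orthonormal eigenbasis `Q` of them the rows of `Qᵀ A w` with
a fixed index are all parallel, so `T(a, b, w) = ∑ₛ Q a s * F s b * u s w` with orthonormal
columns of `Q` and orthogonal rows of `F`. Tested against these orthogonal families, the
contraction along mode `0` says that every `2 × 2` minor of every single-mode flattening of `u s`
vanishes, so `u s` is a pure tensor, and the contractions along the remaining modes say that the
factors of different `u s` are orthogonal.
-/

section LinearAlgebra

theorem LinearMap.IsSymmetric.exists_orthonormalBasis_apply_eq_smul {𝕜 E ι : Type*} [RCLike 𝕜]
    [NormedAddCommGroup E] [InnerProductSpace 𝕜 E] [FiniteDimensional 𝕜 E]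
    {T : ι → E →ₗ[𝕜] E} (hT : ∀ i, (T i).IsSymmetric) (hC : ∀ i j, Commute (T i) (T j)) :
    ∃ b : OrthonormalBasis (Fin (Module.finrank 𝕜 E)) 𝕜 E, ∀ i s, ∃ μ : 𝕜, T i (b s) = μ • b s := by
  classical
  set V : (ι → 𝕜) → Submodule 𝕜 E := fun χ => ⨅ i, Module.End.eigenspace (T i) (χ i)
  have hV : DirectSum.IsInternal V :=
    directSum_isInternal_of_pairwise_commute hT fun i j _ => hC i j
  let _ : Fintype {χ // V χ ≠ ⊥} := hV.submodule_iSupIndep.fintypeNeBotOfFiniteDimensional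
  have hV' : DirectSum.IsInternal fun χ : {χ // V χ ≠ ⊥} => V χ :=
    DirectSum.isInternal_ne_bot_iff.mpr hV
  have hVorth : OrthogonalFamily 𝕜 (fun χ : {χ // V χ ≠ ⊥} => V χ) fun χ => (V χ).subtypeₗᵢ :=
    (orthogonalFamily_iInf_eigenspaces hT).comp Subtype.val_injective
  refine ⟨hV'.subordinateOrthonormalBasis rfl hVorth, fun i s =>
    ⟨(hV'.subordinateOrthonormalBasisIndex rfl s hVorth).1 i, ?_⟩⟩
  have hmem := hV'.subordinateOrthonormalBasis_subordinate rfl s hVorth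
  exact Module.End.mem_eigenspace_iff.mp ((Submodule.mem_iInf _).mp hmem i)

variable {m n : Type*} [Fintype m] [DecidableEq m] [Fintype n]

theorem Matrix.exists_orthogonal_isDiag_of_commute {ι : Type*} {G : ι → Matrix m m ℝ}
    (hG : ∀ i, (G i).IsSymm) (hC : ∀ i j, Commute (G i) (G j)) :
    ∃ Q : Matrix m m ℝ, Qᵀ * Q = 1 ∧ ∀ i, (Qᵀ * G i * Q).IsDiag := by
  obtain ⟨b, hb⟩ := LinearMap.IsSymmetric.exists_orthonormalBasis_apply_eq_smul
    (T := fun i => toLpLinAlgEquiv 2 (G i))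
    (fun i => isSymmetric_toEuclideanLin_iff.mpr (isHermitian_iff_isSymm.mpr (hG i)))
    (fun i j => (hC i j).map _)
  choose μ hμ using hb
  let e : m ≃ Fin (Module.finrank ℝ (EuclideanSpace ℝ m)) :=
    Fintype.equivFinOfCardEq finrank_euclideanSpace.symm
  set Q := (EuclideanSpace.basisFun m ℝ).toBasis.toMatrix (b ∘ e)
  have hQ : Qᵀ * Q = 1 := by
    simpa using (EuclideanSpace.basisFun m ℝ).toMatrix_orthonormalBasis_conjTranspose_mul_self
      (b.reindex e.symm)
  have hGQ : ∀ i, G i * Q = Q * diagonal (fun s => μ i (e s)) := fun i => by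
    ext a s
    rw [mul_diagonal]
    have := congrArg (fun x : EuclideanSpace ℝ m => x a) (hμ i (e s))
    simpa [Q, mul_apply, Module.Basis.toMatrix_apply, mulVec, dotProduct, mul_comm] using this
  refine ⟨Q, hQ, fun i => ?_⟩
  rw [Matrix.mul_assoc, hGQ, ← Matrix.mul_assoc, hQ, Matrix.one_mul]
  exact isDiag_diagonal _

omit [Fintype m] [DecidableEq m] in
theorem Matrix.mul_transpose_apply_self_ne_zero {F : Matrix m n ℝ} {s : m} (hs : F s ≠ 0) :
    (F * Fᵀ) s s ≠ 0 :=
  dotProduct_self_eq_zero.not.mpr hs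

theorem Matrix.exists_eq_diagonal_mul_of_isDiag {W : Type*} [Finite W] [Nonempty W]
    (Φ : W → Matrix m n ℝ) (h₁ : ∀ a b, (Φ a * (Φ b)ᵀ).IsDiag)
    (h₂ : ∀ a b, ((Φ a)ᵀ * Φ b).IsSymm) :
    ∃ (F : Matrix m n ℝ) (u : m → W → ℝ), (F * Fᵀ).IsDiag ∧ (∀ s, F s = 0 → ∀ w, u s w = 0) ∧
      ∀ w, Φ w = diagonal (fun s => u s w) * F := by
  have hrow : ∀ a b s, (Φ b * (Φ b)ᵀ) s s • Φ a s = (Φ a * (Φ b)ᵀ) s s • Φ b s := by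
    intro a b s
    have h : (Φ a)ᵀ * (Φ b * (Φ b)ᵀ) = (Φ b)ᵀ * (Φ a * (Φ b)ᵀ) := by
      rw [← Matrix.mul_assoc, ← (h₂ a b).eq, transpose_mul, transpose_transpose, Matrix.mul_assoc]
    rw [← (h₁ b b).diagonal_diag, ← (h₁ a b).diagonal_diag] at h
    ext j
    simpa [mul_diagonal, mul_comm] using congrFun (congrFun h j) s
  -- `b s` maximizes `‖Φ w s‖²`, so the row `Φ (b s) s` spans every row `Φ w s`
  choose b hb using fun s => Finite.exists_max fun w => (Φ w * (Φ w)ᵀ) s s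
  refine ⟨of fun s => Φ (b s) s, fun s w => (Φ w * (Φ (b s))ᵀ) s s / (Φ (b s) * (Φ (b s))ᵀ) s s,
    fun s t hst => ?_, fun s hs w => ?_, fun w => ?_⟩
  · simpa [mul_apply] using h₁ (b s) (b t) hst
  · have : Φ (b s) s = 0 := hs
    simp [mul_apply, this]
  · ext s j
    rw [diagonal_mul]
    by_cases h0 : (Φ (b s) * (Φ (b s))ᵀ) s s = 0
    · have hw : Φ w s = 0 := dotProduct_self_eq_zero.mp <|
        le_antisymm (h0 ▸ hb s w) (Finset.sum_nonneg fun _ _ => mul_self_nonneg _)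
      simp [hw, h0]
    · have := congrFun (hrow w (b s) s) j
      simp only [Pi.smul_apply, smul_eq_mul] at this
      field_simp
      simpa [mul_comm] using this

theorem Matrix.exists_simultaneous_svd {W : Type*} [Finite W] [Nonempty W]
    (A : W → Matrix m n ℝ) (h₁ : ∀ a b, (A a * (A b)ᵀ).IsSymm)
    (h₂ : ∀ a b, ((A a)ᵀ * A b).IsSymm) :
    ∃ (Q : Matrix m m ℝ) (F : Matrix m n ℝ) (u : m → W → ℝ), Qᵀ * Q = 1 ∧ (F * Fᵀ).IsDiag ∧
      (∀ s, F s = 0 → ∀ w, u s w = 0) ∧ ∀ w, A w = Q * diagonal (fun s => u s w) * F := by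
  set G : W × W → Matrix m m ℝ := fun p => A p.1 * (A p.2)ᵀ
  have hG_mul : ∀ a b c d, G (a, b) * G (c, d) = G (a, c) * G (b, d) := fun a b c d => by
    simp only [G, Matrix.mul_assoc]
    rw [← Matrix.mul_assoc (A b)ᵀ, ← (h₂ b c).eq, transpose_mul, transpose_transpose,
      Matrix.mul_assoc]
  have hG_swap : ∀ a b, G (a, b) = G (b, a) := fun a b => by
    show A a * (A b)ᵀ = A b * (A a)ᵀ
    rw [← (h₁ a b).eq, transpose_mul, transpose_transpose]
  obtain ⟨Q, hQ, hdiag⟩ := exists_orthogonal_isDiag_of_commute (G := G)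
    (fun p => h₁ p.1 p.2) (fun ⟨a, b⟩ ⟨c, d⟩ => by
      rw [Commute, SemiconjBy, hG_mul a b c d, hG_mul c d a b, hG_swap c a, hG_swap d b])
  have hQ' : Q * Qᵀ = 1 := mul_eq_one_comm.mp hQ
  obtain ⟨F, u, hF, hFu, hΦ⟩ := exists_eq_diagonal_mul_of_isDiag (fun w => Qᵀ * A w)
    (fun a b => by simpa [G, transpose_mul, Matrix.mul_assoc] using hdiag (a, b))
    (fun a b => by simpa [transpose_mul, Matrix.mul_assoc, ← Matrix.mul_assoc Q, hQ'] using h₂ a b)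
  refine ⟨Q, F, u, hQ, hF, hFu, fun w => ?_⟩
  rw [Matrix.mul_assoc, ← hΦ, ← Matrix.mul_assoc, hQ', Matrix.one_mul]

omit [Fintype n] in
theorem Matrix.mul_diagonal_mul_apply (Q : Matrix m m ℝ) (x : m → ℝ) (F : Matrix m n ℝ)
    (a : m) (b : n) : (Q * diagonal x * F) a b = ∑ s, Q a s * x s * F s b := by
  rw [mul_apply]
  simp only [mul_diagonal]

omit [Fintype n] in
theorem Matrix.transpose_mul_diagonal_mul {Q : Matrix m m ℝ} (hQ : Qᵀ * Q = 1) (F : Matrix m n ℝ)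
    (x y : m → ℝ) :
    (Q * diagonal x * F)ᵀ * (Q * diagonal y * F) = Fᵀ * diagonal (x * y) * F := by
  simp only [transpose_mul, diagonal_transpose, Matrix.mul_assoc]
  rw [← Matrix.mul_assoc Qᵀ, hQ, Matrix.one_mul, ← Matrix.mul_assoc (diagonal x),
    diagonal_mul_diagonal]
  rfl

variable {Q : Matrix m m ℝ} {F : Matrix m n ℝ}

theorem Matrix.coeff_mul_eq_of_transpose_mul_eq (hQ : Qᵀ * Q = 1) (hF : (F * Fᵀ).IsDiag)
    {x x' y y' : m → ℝ} (h : (Q * diagonal x * F)ᵀ * (Q * diagonal x' * F) =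
      (Q * diagonal y * F)ᵀ * (Q * diagonal y' * F))
    {s : m} (hs : F s ≠ 0) : x s * x' s = y s * y' s := by
  obtain ⟨g, hg⟩ : ∃ g, F * Fᵀ = diagonal g := ⟨_, hF.diagonal_diag.symm⟩
  have hconj : ∀ z : m → ℝ, F * (Fᵀ * diagonal z * F) * Fᵀ = diagonal (g * z * g) := fun z => by
    simp only [← Matrix.mul_assoc]
    rw [Matrix.mul_assoc _ F, hg, diagonal_mul_diagonal, diagonal_mul_diagonal]
    rfl
  rw [transpose_mul_diagonal_mul hQ, transpose_mul_diagonal_mul hQ] at h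
  have := congrArg (fun M => F * M * Fᵀ) h
  simp only [hconj] at this
  have := congrFun (congrFun this s) s
  simp only [diagonal_apply_eq, Pi.mul_apply] at this
  have hgs : g s ≠ 0 := by simpa [hg] using mul_transpose_apply_self_ne_zero hs
  exact mul_left_cancel₀ hgs (mul_right_cancel₀ hgs this)

theorem Matrix.sum_coeff_mul_eq_zero_of_symm {ξ : Type*} [Fintype ξ] (hQ : Qᵀ * Q = 1)
    (hF : (F * Fᵀ).IsDiag) (X Y : ξ → m → ℝ)
    (h : ∀ a a' b b', ∑ x, (Q * diagonal (X x) * F) a b * (Q * diagonal (Y x) * F) a' b' =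
      ∑ x, (Q * diagonal (X x) * F) a' b * (Q * diagonal (Y x) * F) a b')
    {σ τ : m} (hστ : σ ≠ τ) (hσ : F σ ≠ 0) (hτ : F τ ≠ 0) : ∑ x, X x σ * Y x τ = 0 := by
  set Z : Matrix m m ℝ := of fun s t => ∑ x, X x s * Y x t
  set P : n → n → Matrix m m ℝ := fun b b' => of fun s t => F s b * Z s t * F t b'
  have hK : ∀ a a' b b', ∑ x, (Q * diagonal (X x) * F) a b * (Q * diagonal (Y x) * F) a' b' =
      (Q * P b b' * Qᵀ) a a' := by
    intro a a' b b'
    simp only [mul_diagonal_mul_apply]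
    simp only [mul_apply, P, Z, of_apply, transpose_apply, Finset.sum_mul, Finset.mul_sum]
    rw [Finset.sum_comm]
    refine Finset.sum_congr rfl fun s _ => ?_
    rw [Finset.sum_comm]
    exact Finset.sum_congr rfl fun t _ => Finset.sum_congr rfl fun x _ => by ring
  have hP : ∀ b b', (P b b')ᵀ = P b b' := by
    intro b b'
    have hconj : Q * (P b b')ᵀ * Qᵀ = Q * P b b' * Qᵀ := by
      rw [show Q * (P b b')ᵀ * Qᵀ = (Q * P b b' * Qᵀ)ᵀ by
        simp only [transpose_mul, transpose_transpose, Matrix.mul_assoc]]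
      ext a a'
      rw [transpose_apply, ← hK, ← hK, h]
    have hcancel : ∀ M : Matrix m m ℝ, Qᵀ * (Q * M * Qᵀ) * Q = M := fun M => by
      rw [Matrix.mul_assoc, Matrix.mul_assoc, hQ, Matrix.mul_one, ← Matrix.mul_assoc, hQ,
        Matrix.one_mul]
    rw [← hcancel (P b b')ᵀ, hconj, hcancel]
  have hb : ∀ b, F σ b * Z σ τ * (F * Fᵀ) τ τ = 0 := fun b => by
    have hswap := fun b' => congrFun (congrFun (hP b b') σ) τ
    simp only [transpose_apply, P, of_apply] at hswap
    calc F σ b * Z σ τ * (F * Fᵀ) τ τ = ∑ b', F σ b * Z σ τ * F τ b' * F τ b' := by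
          simp [mul_apply, Finset.mul_sum, mul_assoc]
      _ = ∑ b', F τ b * Z τ σ * F σ b' * F τ b' := by simp_rw [hswap]
      _ = F τ b * Z τ σ * (F * Fᵀ) σ τ := by simp [mul_apply, Finset.mul_sum, mul_assoc]
      _ = 0 := by rw [hF hστ, mul_zero]
  obtain ⟨b, hb'⟩ := Function.ne_iff.mp hσ
  exact (mul_eq_zero.mp ((mul_eq_zero.mp (hb b)).resolve_right
    (mul_transpose_apply_self_ne_zero hτ))).resolve_left hb'

theorem sum_mul_sum_of_orthogonal {R α : Type*} [Fintype R] [Fintype α] {g : R → α → ℝ}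
    (hg : ∀ s t, s ≠ t → g s ⬝ᵥ g t = 0) (x y : R → ℝ) :
    ∑ a, (∑ s, g s a * x s) * (∑ t, g t a * y t) = ∑ s, (g s ⬝ᵥ g s) * (x s * y s) := by
  calc ∑ a, (∑ s, g s a * x s) * (∑ t, g t a * y t) = ∑ s, ∑ t, (g s ⬝ᵥ g t) * (x s * y t) := by
        simp only [sum_mul_sum]
        simp only [dotProduct, sum_mul]
        rw [sum_comm]
        refine sum_congr rfl fun s _ => ?_
        rw [sum_comm]
        exact sum_congr rfl fun t _ => sum_congr rfl fun a _ => by ring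
    _ = _ := sum_congr rfl fun s _ =>
        sum_eq_single s (fun t _ hts => by rw [hg s t hts.symm, zero_mul]) (by simp)

end LinearAlgebra

section Tensors

variable {ι : Type*} [DecidableEq ι] {κ : ι → Type*}

/-- The entries of `T •_q T`, indexed by two full index tuples whose `q`-th entries are
ignored. -/
def contraction [∀ j, Fintype (κ j)] (T : (∀ j, κ j) → ℝ) (q : ι) (i j : ∀ j, κ j) : ℝ :=
  ∑ m : κ q, T (update i q m) * T (update j q m)

def HasSymmetricContractions [∀ j, Fintype (κ j)] (T : (∀ j, κ j) → ℝ) : Prop :=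
  ∀ q ℓ, ℓ ≠ q → ∀ i j,
    contraction T q i j = contraction T q (update i ℓ (j ℓ)) (update j ℓ (i ℓ))

theorem prod_apply_update [Fintype ι] (f : ∀ j, κ j → ℝ) (i : ∀ j, κ j) (q : ι) (x : κ q) :
    ∏ j, f j (update i q x j) = f q x * ∏ j ∈ {q}ᶜ, f j (i j) := by
  rw [Fintype.prod_eq_mul_prod_compl q, update_self]
  exact congrArg _ (prod_congr rfl fun j hj => by rw [update_of_ne (by simpa using hj)])

theorem prod_mul_prod_update_swap (f : ∀ j, κ j → ℝ) (S : Finset ι) (i j : ∀ j, κ j) (ℓ : ι) :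
    (∏ k ∈ S, f k (i k)) * ∏ k ∈ S, f k (j k) =
      (∏ k ∈ S, f k (update i ℓ (j ℓ) k)) * ∏ k ∈ S, f k (update j ℓ (i ℓ) k) := by
  rw [← prod_mul_distrib, ← prod_mul_distrib]
  refine prod_congr rfl fun k _ => ?_
  rcases eq_or_ne k ℓ with rfl | hk
  · simp [mul_comm]
  · simp [update_of_ne hk]

theorem mul_pow_card_eq_mul_prod_update [Fintype ι] {u : (∀ j, κ j) → ℝ}
    (hu : ∀ ℓ w w', u w * u w' = u (update w ℓ (w' ℓ)) * u (update w' ℓ (w ℓ)))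
    (w₀ w : ∀ j, κ j) : u w * u w₀ ^ Fintype.card ι = u w₀ * ∏ j, u (update w₀ j (w j)) := by
  suffices ∀ S : Finset ι,
      u (S.piecewise w w₀) * u w₀ ^ #S = u w₀ * ∏ j ∈ S, u (update w₀ j (w j)) by
    simpa using this univ
  intro S
  induction S using Finset.induction_on with
  | empty => simp
  | insert a S ha ih =>
    have hexch := hu a (update (S.piecewise w w₀) a (w a)) w₀
    rw [update_idem, update_self,
      update_eq_self_iff.mpr (S.piecewise_eq_of_notMem _ _ ha).symm] at hexch
    rw [piecewise_insert, card_insert_of_notMem ha, prod_insert ha, pow_succ]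
    linear_combination u w₀ ^ #S * hexch + u (update w₀ a (w a)) * ih

theorem exists_orthogonal_pure_of_exchange [Fintype ι] [∀ j, Fintype (κ j)]
    [∀ j, Nonempty (κ j)] {R : Type*} (u : R → (∀ j, κ j) → ℝ)
    (hexch : ∀ s ℓ w w', u s w * u s w' = u s (update w ℓ (w' ℓ)) * u s (update w' ℓ (w ℓ)))
    (horth : ∀ s t, s ≠ t → ∀ ℓ w w', ∑ x, u s (update w ℓ x) * u t (update w' ℓ x) = 0) :
    ∃ (c : R → ℝ) (v : R → ∀ j, κ j → ℝ),
      (∀ s w, u s w = c s * ∏ j, v s j (w j)) ∧ ∀ j s t, s ≠ t → v s j ⬝ᵥ v t j = 0 := by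
  choose w₀ hw₀ using fun s => Finite.exists_max fun w => |u s w|
  refine ⟨fun s => u s (w₀ s) / u s (w₀ s) ^ Fintype.card ι,
    fun s j x => u s (update (w₀ s) j x), fun s w => ?_,
    fun j s t hst => horth s t hst j (w₀ s) (w₀ t)⟩
  by_cases h0 : u s (w₀ s) = 0
  · have : u s w = 0 := abs_nonpos_iff.mp (by simpa [h0] using hw₀ s w)
    simp [h0, this]
  · rw [div_mul_eq_mul_div, eq_div_iff (pow_ne_zero _ h0)]
    exact mul_pow_card_eq_mul_prod_update (hexch s) (w₀ s) w

end Tensors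

theorem IsOdeco.hasSymmetricContractions {d : ℕ} {n : Fin d → ℕ}
    {T : (∀ j : Fin d, Fin (n j)) → ℝ} (hT : IsOdeco T) : HasSymmetricContractions T := by
  obtain ⟨r, v, horth, hrep⟩ := hT
  have hcontr : ∀ q i j, contraction T q i j = ∑ s, (v s q ⬝ᵥ v s q) *
      ((∏ k ∈ {q}ᶜ, v s k (i k)) * ∏ k ∈ {q}ᶜ, v s k (j k)) := fun q i j => by
    simp only [contraction, hrep, prod_apply_update]
    exact sum_mul_sum_of_orthogonal (horth q) _ _
  intro q ℓ _ i j
  rw [hcontr, hcontr]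
  exact sum_congr rfl fun s _ => by rw [prod_mul_prod_update_swap (v s)]

theorem isOdeco_of_fin_one {n : Fin 1 → ℕ} (T : (∀ j : Fin 1, Fin (n j)) → ℝ) : IsOdeco T := by
  refine ⟨1, fun _ => Fin.cons (fun a => T (Fin.cons a finZeroElim)) finZeroElim,
    fun _ i i' h => absurd (Subsingleton.elim i i') h, fun idx => ?_⟩
  refine Fin.consCases (fun a p => ?_) idx
  simp [Subsingleton.elim p finZeroElim]

section FrontSlices

variable {m : ℕ} {n : Fin (m + 2) → ℕ}

/-- The second mode is written `Fin.succ 0` rather than `1` so that the `Fin.cons` simp lemmas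
apply to the index tuples built below. -/
def frontSlices (T : (∀ j, Fin (n j)) → ℝ) (w : ∀ p : Fin m, Fin (n p.succ.succ)) :
    Matrix (Fin (n 0)) (Fin (n (Fin.succ 0))) ℝ :=
  of fun a b => T (Fin.cons a (Fin.cons b w))

theorem isOdeco_of_frontSlices_eq {T : (∀ j, Fin (n j)) → ℝ} {Q : Matrix (Fin (n 0)) (Fin (n 0)) ℝ}
    {F : Matrix (Fin (n 0)) (Fin (n (Fin.succ 0))) ℝ} {c : Fin (n 0) → ℝ}
    {v : Fin (n 0) → ∀ p : Fin m, Fin (n p.succ.succ) → ℝ} (hQ : Qᵀ * Q = 1)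
    (hF : (F * Fᵀ).IsDiag) (hv : ∀ p s t, s ≠ t → v s p ⬝ᵥ v t p = 0)
    (hT : ∀ w, frontSlices T w = Q * diagonal (fun s => c s * ∏ p, v s p (w p)) * F) :
    IsOdeco T := by
  refine ⟨n 0, fun s => Fin.cons (fun a => c s * Q a s) (Fin.cons (F s) (v s)),
    fun j s t hst => ?_, fun idx => ?_⟩
  · induction j using Fin.cases with
    | zero =>
      show ∑ a, c s * Q a s * (c t * Q a t) = 0
      calc _ = c s * c t * (Qᵀ * Q) s t := by
            simp only [mul_apply, transpose_apply, Finset.mul_sum]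
            exact sum_congr rfl fun a _ => by ring
        _ = 0 := by rw [hQ, one_apply_ne hst, mul_zero]
    | succ j =>
      induction j using Fin.cases with
      | zero => exact hF hst
      | succ p => exact hv p s t hst
  · refine Fin.consCases (fun a => Fin.consCases fun b w => ?_) idx
    show frontSlices T w a b = _
    rw [hT, mul_diagonal_mul_apply]
    refine sum_congr rfl fun s _ => ?_
    simp only [Fin.prod_univ_succ, Fin.cons_zero, Fin.cons_succ]
    ring

namespace HasSymmetricContractions

variable {T : (∀ j, Fin (n j)) → ℝ} (hT : HasSymmetricContractions T)
include hT

theorem frontSlices_mul_transpose_isSymm [Nonempty (Fin (n (Fin.succ 0)))] (w w') :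
    (frontSlices T w * (frontSlices T w')ᵀ).IsSymm := by
  refine IsSymm.ext fun a a' => ?_
  have := hT (Fin.succ 0) 0 (Fin.succ_ne_zero 0).symm
    (Fin.cons a (Fin.cons (Classical.arbitrary _) w))
    (Fin.cons a' (Fin.cons (Classical.arbitrary _) w'))
  simpa only [contraction, frontSlices, mul_apply, transpose_apply, of_apply,
    Fin.update_cons_zero, ← Fin.cons_update, Fin.cons_zero, Fin.cons_succ] using this.symm

theorem frontSlices_transpose_mul_isSymm [Nonempty (Fin (n 0))] (w w') :
    ((frontSlices T w)ᵀ * frontSlices T w').IsSymm := by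
  refine IsSymm.ext fun b b' => ?_
  have := hT 0 (Fin.succ 0) (Fin.succ_ne_zero 0)
    (Fin.cons (Classical.arbitrary _) (Fin.cons b w))
    (Fin.cons (Classical.arbitrary _) (Fin.cons b' w'))
  simpa only [contraction, frontSlices, mul_apply, transpose_apply, of_apply,
    Fin.update_cons_zero, ← Fin.cons_update, Fin.cons_zero, Fin.cons_succ] using this.symm

theorem frontSlices_transpose_mul_update [Nonempty (Fin (n 0))] (p : Fin m) (w w') :
    (frontSlices T w)ᵀ * frontSlices T w' =
      (frontSlices T (update w p (w' p)))ᵀ * frontSlices T (update w' p (w p)) := by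
  ext b b'
  have := hT 0 p.succ.succ (Fin.succ_ne_zero _)
    (Fin.cons (Classical.arbitrary _) (Fin.cons b w))
    (Fin.cons (Classical.arbitrary _) (Fin.cons b' w'))
  simpa only [contraction, frontSlices, mul_apply, transpose_apply, of_apply,
    Fin.update_cons_zero, ← Fin.cons_update, Fin.cons_zero, Fin.cons_succ] using this

theorem sum_frontSlices_update_mul_symm (p : Fin m) (w w') (a a' b b') :
    ∑ x, frontSlices T (update w p x) a b * frontSlices T (update w' p x) a' b' =
      ∑ x, frontSlices T (update w p x) a' b * frontSlices T (update w' p x) a b' := by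
  have := hT p.succ.succ 0 (Fin.succ_ne_zero _).symm (Fin.cons a (Fin.cons b w))
    (Fin.cons a' (Fin.cons b' w'))
  simpa only [contraction, frontSlices, of_apply, Fin.update_cons_zero, ← Fin.cons_update,
    Fin.cons_zero, Fin.cons_succ] using this

theorem isOdeco [∀ j, Nonempty (Fin (n j))] : IsOdeco T := by
  obtain ⟨Q, F, u, hQ, hF, hFu, hA⟩ := exists_simultaneous_svd (frontSlices T)
    hT.frontSlices_mul_transpose_isSymm hT.frontSlices_transpose_mul_isSymm
  have hexch : ∀ s p w w', u s w * u s w' = u s (update w p (w' p)) * u s (update w' p (w p)) := by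
    intro s p w w'
    by_cases hs : F s = 0
    · simp [hFu s hs]
    · have := hT.frontSlices_transpose_mul_update p w w'
      simp only [hA] at this
      exact coeff_mul_eq_of_transpose_mul_eq hQ hF this hs
  have horth : ∀ s t, s ≠ t → ∀ p w w', ∑ x, u s (update w p x) * u t (update w' p x) = 0 := by
    intro s t hst p w w'
    by_cases hs : F s = 0
    · simp [hFu s hs]
    by_cases ht : F t = 0
    · simp [hFu t ht]
    have := hT.sum_frontSlices_update_mul_symm p w w'
    simp only [hA] at this
    exact sum_coeff_mul_eq_zero_of_symm hQ hF _ _ this hst hs ht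
  obtain ⟨c, v, hu, hv⟩ := exists_orthogonal_pure_of_exchange u hexch horth
  exact isOdeco_of_frontSlices_eq (c := c) hQ hF hv fun w => by simp only [hA, hu]

end HasSymmetricContractions

end FrontSlices

/-- A tensor `T` of size `n 0 × ⋯ × n (d-1)` is odeco iff for every mode `q` the contraction
`T •_q T` of `T` with itself along the `q`-th mode, with entries
`∑ m, T i[q ↦ m] * T j[q ↦ m]`, is symmetric under exchanging the `ℓ`-th indices `i ℓ` and
`j ℓ` of its two "blocks", for every `ℓ ≠ q`. -/
theorem odeco_iff_contractions_symmetric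
    {d : ℕ} (hd : 1 ≤ d) (n : Fin d → ℕ) (hn : ∀ j, 1 ≤ n j)
    (T : (∀ j : Fin d, Fin (n j)) → ℝ) :
    IsOdeco T ↔
      ∀ (q ℓ : Fin d), ℓ ≠ q →
        ∀ i j : ∀ j' : Fin d, Fin (n j'),
          (∑ m : Fin (n q), T (Function.update i q m) * T (Function.update j q m)) =
          ∑ m : Fin (n q),
            T (Function.update (Function.update i ℓ (j ℓ)) q m) *
              T (Function.update (Function.update j ℓ (i ℓ)) q m) := by
  refine ⟨IsOdeco.hasSymmetricContractions, fun hT => ?_⟩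
  obtain _ | _ | m := d
  · omega
  · exact isOdeco_of_fin_one T
  · have (j : Fin (m + 2)) : Nonempty (Fin (n j)) := Fin.pos_iff_nonempty.mp (hn j)
    exact HasSymmetricContractions.isOdeco hT
end

section
/- Let d ≥ 1 and n ≥ 1, and let T be a symmetric real tensor of order d and size n × ⋯ × n. Then T is symmetrically orthogonally decomposable if and only if the contraction T•₁T is fully symmetric, i.e. for all indices, the entry (T•₁T)_{i_2…i_d j_2…j_d} = Σ_{m=1}^n T_{m i_2…i_d} T_{m j_2…j_d} is unchanged under every permutation of the 2d−2 indices i_2,…,i_d,j_2,…,j_d. -/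
/-!
If `T = ∑ λᵢ vᵢ^{⊗(d+1)}` with orthonormal `vᵢ`, then orthonormality collapses the contraction to
`T •₁ T = ∑ λᵢ² vᵢ^{⊗2d}`, which is visibly symmetric.

Conversely, exchanging the first free index of each copy of `T` in `T •₁ T` says exactly that the
symmetric matrix slices `M_β = T(·, ·, β)` pairwise commute. They are therefore diagonalised by a
single orthonormal basis `(q_a)`. Contracting `T` with `q_a` in its first slot gives a symmetric
tensor all of whose vector slices are multiples of `q_a`, hence a multiple of `q_a^{⊗d}`; expanding
`T` in the basis `(q_a)` then gives an orthogonal decomposition. A tensor of order one is odeco in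
the standard basis.
-/

open Finset
open scoped Matrix

/-- A tensor of order `d` and size `n × ⋯ × n` is symmetric if its entries are invariant under
every permutation of the `d` indices. -/
def IsSymTensor {d n : ℕ} (T : (Fin d → Fin n) → ℝ) : Prop :=
  ∀ (σ : Equiv.Perm (Fin d)) (idx : Fin d → Fin n), T (idx ∘ σ) = T idx

/-- A symmetric tensor is symmetrically orthogonally decomposable (symmetrically odeco) if it
can be written as `∑ i, λ i • (v i)^{⊗d}` with `v 0, …, v (r-1)` orthonormal in `ℝ^n`. -/
def IsSymOdeco {d n : ℕ} (T : (Fin d → Fin n) → ℝ) : Prop :=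
  ∃ (r : ℕ) (lam : Fin r → ℝ) (v : Fin r → Fin n → ℝ),
    (∀ i i' : Fin r, (∑ a, v i a * v i' a) = if i = i' then 1 else 0) ∧
    ∀ idx : Fin d → Fin n, T idx = ∑ i, lam i * ∏ j, v i (idx j)

theorem LinearMap.IsSymmetric.exists_orthonormalBasis_apply_eq_smul_of_commute
    {𝕜 E ι : Type*} [RCLike 𝕜] [NormedAddCommGroup E] [InnerProductSpace 𝕜 E]
    [FiniteDimensional 𝕜 E] {n : ℕ} (hn : Module.finrank 𝕜 E = n) {T : ι → Module.End 𝕜 E}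
    (hT : ∀ i, (T i).IsSymmetric) (hC : Pairwise (Function.onFun Commute T)) :
    ∃ (b : OrthonormalBasis (Fin n) 𝕜 E) (μ : ι → Fin n → 𝕜), ∀ i a, T i (b a) = μ i a • b a := by
  classical
  let V : (ι → 𝕜) → Submodule 𝕜 E := fun χ => ⨅ i, Module.End.eigenspace (T i) (χ i)
  have hV : DirectSum.IsInternal V := directSum_isInternal_of_pairwise_commute hT hC
  have : Fintype {χ // V χ ≠ ⊥} := hV.submodule_iSupIndep.fintypeNeBotOfFiniteDimensional
  have hV' : DirectSum.IsInternal fun χ : {χ // V χ ≠ ⊥} => V χ :=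
    DirectSum.isInternal_ne_bot_iff.mpr hV
  have hO := (orthogonalFamily_iInf_eigenspaces hT).comp (Subtype.val_injective (p := (V · ≠ ⊥)))
  refine ⟨hV'.subordinateOrthonormalBasis hn hO,
    fun i a => (hV'.subordinateOrthonormalBasisIndex hn a hO).1 i, fun i a => ?_⟩
  exact Module.End.mem_eigenspace_iff.mp
    ((Submodule.mem_iInf _).mp (hV'.subordinateOrthonormalBasis_subordinate hn a hO) i)

theorem Matrix.exists_unitary_forall_eq_mul_diagonal_mul_star
    {𝕜 m ι : Type*} [RCLike 𝕜] [Fintype m] [DecidableEq m] {A : ι → Matrix m m 𝕜}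
    (hA : ∀ i, (A i).IsHermitian) (hC : Pairwise (Function.onFun Commute A)) :
    ∃ U ∈ Matrix.unitaryGroup m 𝕜, ∃ μ : ι → m → 𝕜,
      ∀ i, A i = U * Matrix.diagonal (μ i) * star U := by
  have hsym : ∀ i, (Matrix.toEuclideanLin (A i)).IsSymmetric :=
    fun i => Matrix.isSymmetric_toEuclideanLin_iff.mpr (hA i)
  have hcomm : Pairwise (Function.onFun Commute fun i => Matrix.toEuclideanLin (A i)) :=
    fun i j hij => (hC hij).map (Matrix.toLpLinAlgEquiv 2)
  obtain ⟨b, μ, hb⟩ :=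
    LinearMap.IsSymmetric.exists_orthonormalBasis_apply_eq_smul_of_commute
      (finrank_euclideanSpace (𝕜 := 𝕜) (ι := m)) hsym hcomm
  let e := (Fintype.equivFin m).symm
  let b' : OrthonormalBasis m 𝕜 (EuclideanSpace 𝕜 m) := b.reindex e
  have hU := (EuclideanSpace.basisFun m 𝕜).toMatrix_orthonormalBasis_mem_unitary b'
  set U := (EuclideanSpace.basisFun m 𝕜).toBasis.toMatrix b'
  refine ⟨U, hU, fun i => μ i ∘ e.symm, fun i => ?_⟩
  have hAU : A i * U = U * Matrix.diagonal (μ i ∘ e.symm) := by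
    ext k a
    have h := congrArg (fun x : EuclideanSpace 𝕜 m => x k) (hb i (e.symm a))
    rw [Matrix.mul_diagonal]
    simp only [Matrix.toLpLin_apply, Matrix.mulVec, dotProduct, PiLp.smul_apply, smul_eq_mul,
      OrthonormalBasis.coe_reindex, Matrix.mul_apply, Module.Basis.toMatrix_apply,
      Function.comp_apply, OrthonormalBasis.coe_toBasis_repr_apply, EuclideanSpace.basisFun_repr,
      U, b'] at h ⊢
    rw [h, mul_comm]
  rw [← hAU, mul_assoc, Matrix.mem_unitaryGroup_iff.mp hU, mul_one]

theorem sum_mul_sum_of_orthonormal {R ι κ : Type*} [CommSemiring R] [Fintype ι] [Fintype κ]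
    [DecidableEq ι] {v : ι → κ → R} (hv : ∀ i i', ∑ a, v i a * v i' a = if i = i' then 1 else 0)
    (x y : ι → R) : ∑ a, (∑ i, x i * v i a) * (∑ i, y i * v i a) = ∑ i, x i * y i := by
  calc ∑ a, (∑ i, x i * v i a) * (∑ i, y i * v i a)
      = ∑ a, ∑ i, ∑ i', x i * y i' * (v i a * v i' a) := by
        refine sum_congr rfl fun a _ => ?_
        rw [sum_mul_sum]
        exact sum_congr rfl fun i _ => sum_congr rfl fun i' _ => by ring
    _ = ∑ i, ∑ i', x i * y i' * ∑ a, v i a * v i' a := by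
        simp only [mul_sum]
        rw [sum_comm]
        exact sum_congr rfl fun i _ => sum_comm
    _ = ∑ i, x i * y i := by simp [hv]

def frontSlice {d n : ℕ} (T : (Fin (d + 2) → Fin n) → ℝ) (β : Fin d → Fin n) :
    Matrix (Fin n) (Fin n) ℝ :=
  Matrix.of fun m i => T (Fin.cons m (Fin.cons i β))

namespace IsSymTensor

variable {d n : ℕ}

theorem apply_cons {T : (Fin (d + 1) → Fin n) → ℝ} (hT : IsSymTensor T) (m : Fin n) :
    IsSymTensor fun β : Fin d → Fin n => T (Fin.cons m β) := by
  intro σ β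
  show T _ = T _
  rw [← hT (Equiv.Perm.decomposeFin.symm (0, σ)) (Fin.cons m β)]
  congr 1
  ext x
  refine Fin.cases ?_ (fun j => ?_) x <;> simp [Equiv.Perm.decomposeFin_symm_apply_succ]

theorem apply_cons_cons_comm {T : (Fin (d + 2) → Fin n) → ℝ} (hT : IsSymTensor T)
    (i m : Fin n) (β : Fin d → Fin n) :
    T (Fin.cons i (Fin.cons m β)) = T (Fin.cons m (Fin.cons i β)) := by
  rw [← hT (Equiv.swap 0 1) (Fin.cons m (Fin.cons i β))]
  congr 1
  ext x
  refine Fin.cases ?_ (fun j => Fin.cases ?_ (fun k => ?_) j) x <;>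
    simp [Equiv.swap_apply_def, Fin.ext_iff]

theorem contract {T : (Fin (d + 1) → Fin n) → ℝ} (hT : IsSymTensor T) (q : Fin n → ℝ) :
    IsSymTensor fun β : Fin d → Fin n => ∑ m, q m * T (Fin.cons m β) :=
  fun σ β => sum_congr rfl fun m _ => congrArg (q m * ·) (hT.apply_cons m σ β)

theorem exists_eq_mul_prod_of_apply_cons_eq_mul {T : (Fin (d + 1) → Fin n) → ℝ} (hT : IsSymTensor T)
    {q : Fin n → ℝ} {g : (Fin d → Fin n) → ℝ} (hg : ∀ i β, T (Fin.cons i β) = q i * g β) :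
    ∃ c, ∀ idx, T idx = c * ∏ j, q (idx j) := by
  induction d with
  | zero =>
    refine ⟨g Fin.elim0, fun idx => ?_⟩
    rw [← Fin.cons_self_tail idx, hg, Subsingleton.elim (Fin.tail idx) Fin.elim0]
    simp [mul_comm]
  | succ D ih =>
    by_cases hq : q = 0
    · exact ⟨0, fun idx => by rw [← Fin.cons_self_tail idx, hg, hq]; simp⟩
    obtain ⟨i₀, hi₀⟩ : ∃ i, q i ≠ 0 := by simpa [funext_iff] using hq
    obtain ⟨c, hc⟩ := ih (hT.apply_cons i₀) fun i γ => by
      rw [hT.apply_cons_cons_comm, hg]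
    refine ⟨c / q i₀, fun idx => ?_⟩
    have hg_eq : q i₀ * g (Fin.tail idx) = c * ∏ j, q (Fin.tail idx j) := by rw [← hg, hc]
    rw [← Fin.cons_self_tail idx, hg, Fin.prod_univ_succ]
    simp only [Fin.cons_zero, Fin.cons_succ]
    field_simp
    linear_combination q (idx 0) * hg_eq

theorem frontSlice_isHermitian {T : (Fin (d + 2) → Fin n) → ℝ} (hT : IsSymTensor T)
    (β : Fin d → Fin n) : (frontSlice T β).IsHermitian := by
  ext m i
  simp [frontSlice, hT.apply_cons_cons_comm]

theorem commute_frontSlice {T : (Fin (d + 2) → Fin n) → ℝ} (hT : IsSymTensor T)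
    (hsymm : ∀ (σ : Equiv.Perm (Fin (d + 1) ⊕ Fin (d + 1)))
      (f : Fin (d + 1) ⊕ Fin (d + 1) → Fin n),
      ∑ m, T (Fin.cons m ((f ∘ σ) ∘ Sum.inl)) * T (Fin.cons m ((f ∘ σ) ∘ Sum.inr)) =
        ∑ m, T (Fin.cons m (f ∘ Sum.inl)) * T (Fin.cons m (f ∘ Sum.inr)))
    (β γ : Fin d → Fin n) : Commute (frontSlice T β) (frontSlice T γ) := by
  ext m k
  have h := hsymm (Equiv.swap (Sum.inl 0) (Sum.inr 0)) (Sum.elim (Fin.cons m β) (Fin.cons k γ))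
  have e₁ : (Sum.elim (Fin.cons m β) (Fin.cons k γ) ∘ Equiv.swap (Sum.inl 0) (Sum.inr 0)) ∘
      Sum.inl = Fin.cons k β := by
    ext x
    refine Fin.cases ?_ (fun j => ?_) x <;> simp [Equiv.swap_apply_def]
  have e₂ : (Sum.elim (Fin.cons m β) (Fin.cons k γ) ∘ Equiv.swap (Sum.inl 0) (Sum.inr 0)) ∘
      Sum.inr = Fin.cons m γ := by
    ext x
    refine Fin.cases ?_ (fun j => ?_) x <;> simp [Equiv.swap_apply_def]
  rw [e₁, e₂, Sum.elim_comp_inl, Sum.elim_comp_inr] at h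
  simp only [Matrix.mul_apply, frontSlice, Matrix.of_apply, hT.apply_cons_cons_comm m]
  rw [← h]
  exact sum_congr rfl fun j _ => mul_comm _ _

theorem isSymOdeco_of_commute_frontSlice {T : (Fin (d + 2) → Fin n) → ℝ} (hT : IsSymTensor T)
    (hC : ∀ β γ, Commute (frontSlice T β) (frontSlice T γ)) : IsSymOdeco T := by
  obtain ⟨Q, hQ, μ, hdiag⟩ := Matrix.exists_unitary_forall_eq_mul_diagonal_mul_star
    hT.frontSlice_isHermitian fun β γ _ => hC β γ
  have hstar : star Q = Qᵀ := by simp [Matrix.star_eq_conjTranspose]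
  have hQQt : Q * Qᵀ = 1 := hstar ▸ Matrix.mem_unitaryGroup_iff.mp hQ
  have hQtQ : Qᵀ * Q = 1 := hstar ▸ Matrix.mem_unitaryGroup_iff'.mp hQ
  have hcontract_cons (a : Fin n) (i : Fin n) (β : Fin d → Fin n) :
      ∑ m, Q m a * T (Fin.cons m (Fin.cons i β)) = Q i a * μ β a := by
    have h : Qᵀ * frontSlice T β = Matrix.diagonal (μ β) * Qᵀ := by
      rw [hdiag β, hstar, ← mul_assoc, ← mul_assoc, hQtQ, one_mul]
    have h_ai := congrFun (congrFun h a) i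
    rw [Matrix.diagonal_mul, Matrix.mul_apply] at h_ai
    simpa [frontSlice, mul_comm] using h_ai
  choose c hc using fun a =>
    (hT.contract (Q · a)).exists_eq_mul_prod_of_apply_cons_eq_mul (hcontract_cons a)
  refine ⟨n, c, fun a m => Q m a, fun a b => ?_, fun idx => ?_⟩
  · simpa [Matrix.mul_apply, Matrix.one_apply] using congrFun (congrFun hQtQ a) b
  · have hrecover (k : Fin n) (β : Fin (d + 1) → Fin n) :
        T (Fin.cons k β) = ∑ a, Q k a * ∑ m, Q m a * T (Fin.cons m β) := by
      have h := congrFun (congrArg (· *ᵥ fun m => T (Fin.cons m β)) hQQt) k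
      rw [← Matrix.mulVec_mulVec, Matrix.one_mulVec] at h
      simpa [Matrix.mulVec, dotProduct] using h.symm
    rw [← Fin.cons_self_tail idx, hrecover]
    refine sum_congr rfl fun a _ => ?_
    rw [hc, Fin.prod_univ_succ (n := d + 1)]
    simp only [Fin.cons_zero, Fin.cons_succ]
    ring

end IsSymTensor

theorem isSymOdeco_of_order_one {n : ℕ} (T : (Fin 1 → Fin n) → ℝ) : IsSymOdeco T := by
  refine ⟨n, fun a => T fun _ => a, fun a => Pi.single a 1, fun a b => ?_, fun idx => ?_⟩
  · simp [Pi.single_apply, eq_comm]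
  · have hidx : idx = fun _ => idx 0 := funext fun j => by rw [Fin.fin_one_eq_zero j]
    nth_rewrite 1 [hidx]
    simp [Pi.single_apply]

theorem sum_apply_cons_mul_apply_cons_eq_sum_sq_mul_prod {d n r : ℕ} {T : (Fin (d + 1) → Fin n) → ℝ}
    {lam : Fin r → ℝ} {v : Fin r → Fin n → ℝ}
    (hv : ∀ i i', ∑ a, v i a * v i' a = if i = i' then 1 else 0)
    (hT : ∀ idx, T idx = ∑ i, lam i * ∏ j, v i (idx j)) (f : Fin d ⊕ Fin d → Fin n) :
    ∑ m, T (Fin.cons m (f ∘ Sum.inl)) * T (Fin.cons m (f ∘ Sum.inr)) =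
      ∑ i, lam i ^ 2 * ∏ x, v i (f x) := by
  have hcons (m : Fin n) (β : Fin d → Fin n) :
      T (Fin.cons m β) = ∑ i, (lam i * ∏ j, v i (β j)) * v i m := by
    rw [hT]
    refine sum_congr rfl fun i _ => ?_
    rw [Fin.prod_univ_succ]
    simp only [Fin.cons_zero, Fin.cons_succ]
    ring
  simp only [hcons, sum_mul_sum_of_orthonormal hv, Fintype.prod_sum_type, Function.comp_apply]
  exact sum_congr rfl fun i _ => by ring

theorem symOdeco_iff_contraction_fully_symmetric_general
    (d n : ℕ) (T : (Fin (d + 1) → Fin n) → ℝ) (hT : IsSymTensor T) :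
    IsSymOdeco T ↔
      ∀ (σ : Equiv.Perm (Fin d ⊕ Fin d)) (f : Fin d ⊕ Fin d → Fin n),
        (∑ m : Fin n, T (Fin.cons m ((f ∘ σ) ∘ Sum.inl)) * T (Fin.cons m ((f ∘ σ) ∘ Sum.inr))) =
        ∑ m : Fin n, T (Fin.cons m (f ∘ Sum.inl)) * T (Fin.cons m (f ∘ Sum.inr)) := by
  constructor
  · rintro ⟨r, lam, v, hv, hT_eq⟩ σ f
    rw [sum_apply_cons_mul_apply_cons_eq_sum_sq_mul_prod hv hT_eq, sum_apply_cons_mul_apply_cons_eq_sum_sq_mul_prod hv hT_eq]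
    exact sum_congr rfl fun i _ => by rw [Function.comp_def, Equiv.prod_comp σ fun x => v i (f x)]
  · intro hsymm
    cases d with
    | zero => exact isSymOdeco_of_order_one T
    | succ d => exact hT.isSymOdeco_of_commute_frontSlice (hT.commute_frontSlice hsymm)

/-- A symmetric tensor `T` of order `d + 1 ≥ 1` is symmetrically odeco iff the contraction
`T •₁ T` of `T` with itself along the first mode, viewed as a function of the remaining
`2d` indices (`d` from each copy, encoded as `Fin d ⊕ Fin d`), is invariant under every
permutation of all these indices. -/
theorem symOdeco_iff_contraction_fully_symmetric
    (d n : ℕ) (hn : 1 ≤ n) (T : (Fin (d + 1) → Fin n) → ℝ) (hT : IsSymTensor T) :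
    IsSymOdeco T ↔
      ∀ (σ : Equiv.Perm (Fin d ⊕ Fin d)) (f : Fin d ⊕ Fin d → Fin n),
        (∑ m : Fin n, T (Fin.cons m ((f ∘ σ) ∘ Sum.inl)) * T (Fin.cons m ((f ∘ σ) ∘ Sum.inr))) =
        ∑ m : Fin n, T (Fin.cons m (f ∘ Sum.inl)) * T (Fin.cons m (f ∘ Sum.inr)) :=
  symOdeco_iff_contraction_fully_symmetric_general d n T hT
end

section
/- Let n ≥ 2 and let P ∈ SOT_{2,n}. Then for all a,b,c,d,e,f ∈ {1,…,n}: Σ_{t=1}^n ( P_{abet} P_{cdft} − P_{abft} P_{cdet} ) = 0. That is, all the quadratic polynomials g^{(1)}_{a,b,c,d,e,f} of 𝒬_n vanish on SOT_{2,n}. -/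
open Finset

/-- `P ∈ SOT_{2,n}`: the `n×n×n×n` tensor `P` is the contraction along the third modes of two
symmetrically odeco tensors `T = ∑ i, λ i • (v i)^{⊗3}` and `S = ∑ j, μ j • (w j)^{⊗3}`,
where `v` and `w` are orthonormal families in `ℝ^n`. -/
def InSOT2 (n : ℕ) (P : Fin n → Fin n → Fin n → Fin n → ℝ) : Prop :=
  ∃ (lam mu : Fin n → ℝ) (v w : Fin n → Fin n → ℝ),
    (∀ i j, (∑ k, v i k * v j k) = if i = j then 1 else 0) ∧
    (∀ i j, (∑ k, w i k * w j k) = if i = j then 1 else 0) ∧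
    ∀ a b c d, P a b c d =
      ∑ s, (∑ i, lam i * (v i a * v i b * v i s)) * (∑ j, mu j * (w j c * w j d * w j s))

private lemma factor_eq (n : ℕ) (mu : Fin n → ℝ) (w : Fin n → Fin n → ℝ)
    (F : Fin n → ℝ) (g t : Fin n) :
    (∑ s, F s * (∑ j, mu j * (w j g * w j t * w j s))) =
      ∑ j, (mu j * w j g * (∑ s, F s * w j s)) * w j t := by
  rw [show (∑ s, F s * (∑ j, mu j * (w j g * w j t * w j s)))
      = ∑ s, ∑ j, F s * (mu j * (w j g * w j t * w j s)) by
    exact Finset.sum_congr rfl fun s _ => Finset.mul_sum _ _ _]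
  rw [Finset.sum_comm]
  refine Finset.sum_congr rfl fun j _ => ?_
  rw [show (mu j * w j g * (∑ s, F s * w j s)) * w j t
      = ∑ s, F s * (mu j * (w j g * w j t * w j s)) by
    rw [Finset.mul_sum, Finset.sum_mul]
    exact Finset.sum_congr rfl fun s _ => by ring]

private lemma key (n : ℕ) (mu : Fin n → ℝ) (w : Fin n → Fin n → ℝ)
    (hw : ∀ i j, (∑ k, w i k * w j k) = if i = j then 1 else 0)
    (F1 F2 : Fin n → ℝ) (e f : Fin n) :
    (∑ t, (∑ s, F1 s * (∑ j, mu j * (w j e * w j t * w j s)))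
        * (∑ s, F2 s * (∑ j, mu j * (w j f * w j t * w j s)))) =
      ∑ j, (mu j * w j e * (∑ s, F1 s * w j s)) * (mu j * w j f * (∑ s, F2 s * w j s)) := by
  have h : ∀ t, (∑ s, F1 s * (∑ j, mu j * (w j e * w j t * w j s)))
        * (∑ s, F2 s * (∑ j, mu j * (w j f * w j t * w j s)))
      = ∑ j, ∑ j', ((mu j * w j e * (∑ s, F1 s * w j s))
          * (mu j' * w j' f * (∑ s, F2 s * w j' s))) * (w j t * w j' t) := by
    intro t
    rw [factor_eq, factor_eq, Finset.sum_mul_sum]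
    exact Finset.sum_congr rfl fun j _ => Finset.sum_congr rfl fun j' _ => by ring
  rw [Finset.sum_congr rfl fun t _ => h t]
  rw [Finset.sum_comm]
  refine Finset.sum_congr rfl fun j _ => ?_
  rw [Finset.sum_comm]
  have : ∀ j', (∑ t, ((mu j * w j e * (∑ s, F1 s * w j s))
          * (mu j' * w j' f * (∑ s, F2 s * w j' s))) * (w j t * w j' t))
      = ((mu j * w j e * (∑ s, F1 s * w j s))
          * (mu j' * w j' f * (∑ s, F2 s * w j' s))) * (if j = j' then (1:ℝ) else 0) := by
    intro j'
    rw [← Finset.mul_sum, hw j j']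
  rw [Finset.sum_congr rfl fun j' _ => this j']
  simp

/-- The quadratic polynomials `g⁽¹⁾` of `𝒬ₙ` vanish on `SOT_{2,n}`:
`∑ t, (P a b e t * P c d f t − P a b f t * P c d e t) = 0`. -/
theorem Qn_g1_vanishes_on_SOT
    (n : ℕ) (hn : 2 ≤ n) (P : Fin n → Fin n → Fin n → Fin n → ℝ) (hP : InSOT2 n P) :
    ∀ a b c d e f : Fin n,
      (∑ t, (P a b e t * P c d f t - P a b f t * P c d e t)) = 0 := by
  obtain ⟨lam, mu, v, w, hv, hw, hPf⟩ := hP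
  intro a b c d e f
  rw [Finset.sum_sub_distrib]
  have h1 : ∀ t, P a b e t = ∑ s, (∑ i, lam i * (v i a * v i b * v i s))
      * (∑ j, mu j * (w j e * w j t * w j s)) := fun t => hPf a b e t
  simp only [hPf]
  rw [key n mu w hw _ _ e f, key n mu w hw _ _ f e]
  rw [sub_eq_zero]
  exact Finset.sum_congr rfl fun j _ => by ring
end

section
/- Let n ≥ 2 and let P ∈ SOT_{2,n}. Then for all a,b,c,d,e,f ∈ {1,…,n}: Σ_{t=1}^n ( P_{etab} P_{ftcd} − P_{ftab} P_{etcd} ) = 0. That is, all the quadratic polynomials g^{(2)}_{a,b,c,d,e,f} of 𝒬_n vanish on SOT_{2,n}. -/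
open Finset

private lemma ortho_sum {n : ℕ} (v : Fin n → Fin n → ℝ)
    (hv : ∀ i j, (∑ k, v i k * v j k) = if i = j then 1 else 0)
    (c d : Fin n → ℝ) :
    (∑ t, (∑ i, c i * v i t) * (∑ i, d i * v i t)) = ∑ i, c i * d i := by
  have expand : (∑ t, (∑ i, c i * v i t) * (∑ i, d i * v i t))
      = ∑ i, ∑ j, ∑ t, (c i * v i t) * (d j * v j t) := by
    simp only [Finset.sum_mul_sum]
    rw [Finset.sum_comm]
    exact Finset.sum_congr rfl fun i _ => Finset.sum_comm
  rw [expand]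
  refine Finset.sum_congr rfl fun i _ => ?_
  have hterm : ∀ j : Fin n, (∑ t, (c i * v i t) * (d j * v j t))
      = c i * d j * (∑ t, v i t * v j t) := by
    intro j
    rw [Finset.mul_sum]
    exact Finset.sum_congr rfl fun t _ => by ring
  rw [Finset.sum_eq_single i]
  · rw [hterm i, hv i i]; simp
  · intro j _ hj; rw [hterm j, hv i j, if_neg (Ne.symm hj)]; ring
  · simp

/-- The quadratic polynomials `g⁽²⁾` of `𝒬ₙ` vanish on `SOT_{2,n}`:
`∑ t, (P e t a b * P f t c d − P f t a b * P e t c d) = 0`. -/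
theorem Qn_g2_vanishes_on_SOT
    (n : ℕ) (hn : 2 ≤ n) (P : Fin n → Fin n → Fin n → Fin n → ℝ) (hP : InSOT2 n P) :
    ∀ a b c d e f : Fin n,
      (∑ t, (P e t a b * P f t c d - P f t a b * P e t c d)) = 0 := by
  obtain ⟨lam, mu, v, w, hv, hw, hP⟩ := hP
  intro a b c d e f
  set G : Fin n → Fin n → Fin n → ℝ :=
    fun x y s => ∑ j, mu j * (w j x * w j y * w j s) with hG
  set B : Fin n → Fin n → Fin n → ℝ :=
    fun i x y => ∑ s, v i s * G x y s with hB
  have hrep : ∀ (e' t x y : Fin n),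
      P e' t x y = ∑ i, (lam i * v i e' * B i x y) * v i t := by
    intro e' t x y
    calc P e' t x y
        = ∑ s, ∑ i, (lam i * (v i e' * v i t * v i s)) * G x y s := by
          rw [hP]
          exact Finset.sum_congr rfl fun s _ => Finset.sum_mul _ _ _
      _ = ∑ i, ∑ s, (lam i * (v i e' * v i t * v i s)) * G x y s :=
          Finset.sum_comm
      _ = ∑ i, (lam i * v i e' * B i x y) * v i t := by
          refine Finset.sum_congr rfl fun i _ => ?_
          simp only [hB]
          rw [Finset.mul_sum, Finset.sum_mul]
          exact Finset.sum_congr rfl fun s _ => by ring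
  rw [Finset.sum_sub_distrib]
  have h1 : (∑ t, P e t a b * P f t c d)
      = ∑ i, (lam i * v i e * B i a b) * (lam i * v i f * B i c d) := by
    simp_rw [hrep]; exact ortho_sum v hv _ _
  have h2 : (∑ t, P f t a b * P e t c d)
      = ∑ i, (lam i * v i f * B i a b) * (lam i * v i e * B i c d) := by
    simp_rw [hrep]; exact ortho_sum v hv _ _
  rw [h1, h2, sub_eq_zero]
  exact Finset.sum_congr rfl fun i _ => by ring
end

section
/- Let n ≥ 2 and let P ∈ SOT_{2,n}. Then h_n(P) = 0, i.e. Σ_{k_1=1}^n ⋯ Σ_{k_n=1}^n Σ_{σ∈S_n} Σ_{γ∈S_n} sgn(σ) sgn(γ) · P_{k_1 σ(1) k_n γ(1)} · P_{k_2 σ(2) k_1 γ(2)} ⋯ P_{k_n σ(n) k_{n−1} γ(n)} = 0. -/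
open Finset

/-! Write `G = V Wᵀ` for the Gram matrix of the two orthonormal bases; contracting the third modes
gives `P = ∑ i j, λᵢ μⱼ Gᵢⱼ vᵢ ⊗ vᵢ ⊗ wⱼ ⊗ wⱼ`. Expanding `hₙ` multilinearly over the pairs
`(iₜ, jₜ)` chosen in the factors `t`, the sums over `σ` and `γ` become `det [v_{iₜ}]` and
`det [w_{jₜ}]`, and the cyclic sum over `k` becomes `∏ₜ G (iₜ) (jₜ₊₁)`. For fixed `j` the sum over
`i` is then `det (Vᵀ M)` with `M = diag λ · B` and `B m t = μ (jₜ) G m jₜ G m jₜ₊₁`. If two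
cyclically adjacent `jₜ` agree, `det [w_{jₜ}]` has two equal columns; otherwise every column of `B`
sums to zero by orthogonality of `G`, so `det B = 0`. -/

open scoped Matrix

namespace SOT

variable {R : Type*} [CommRing R]

section Matrix

variable {m ι : Type*} [Fintype m] [DecidableEq m] [Fintype ι]

theorem det_mul_eq_sum_prod_mul_det (V : Matrix m ι R) (A : Matrix ι m R) :
    (V * A).det = ∑ i : m → ι, (∏ t, A (i t) t) * (Matrix.of fun b t => V b (i t)).det := by
  simp only [Matrix.det_apply', Matrix.mul_apply, Finset.prod_univ_sum, Fintype.piFinset_univ,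
    Finset.mul_sum, Matrix.of_apply]
  rw [Finset.sum_comm]
  refine Finset.sum_congr rfl fun i _ => Finset.sum_congr rfl fun σ _ => ?_
  rw [Finset.prod_mul_distrib]
  ring

theorem sum_dotProduct_mul_dotProduct_of_orthonormal {v w : m → m → R}
    (hv : Matrix.of v * (Matrix.of v)ᵀ = 1) (hw : Matrix.of w * (Matrix.of w)ᵀ = 1) (a b : m) :
    ∑ i, v i ⬝ᵥ w a * v i ⬝ᵥ w b = (1 : Matrix m m R) a b := by
  have hv' : (Matrix.of v)ᵀ * Matrix.of v = 1 := mul_eq_one_comm.mp hv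
  have gram : (Matrix.of v * (Matrix.of w)ᵀ)ᵀ * (Matrix.of v * (Matrix.of w)ᵀ) = 1 := by
    rw [Matrix.transpose_mul, Matrix.transpose_transpose, Matrix.mul_assoc,
      ← Matrix.mul_assoc (Matrix.of v)ᵀ, hv', Matrix.one_mul, hw]
  rw [← gram, Matrix.mul_apply]
  rfl

theorem det_dotProduct_mul_dotProduct_eq_zero [IsDomain R] [Nonempty m] {v w : m → m → R}
    (hv : Matrix.of v * (Matrix.of v)ᵀ = 1) (hw : Matrix.of w * (Matrix.of w)ᵀ = 1)
    (c : m → R) {j j' : m → m} (hj : ∀ t, j t ≠ j' t) :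
    (Matrix.of fun i t => c t * (v i ⬝ᵥ w (j t) * v i ⬝ᵥ w (j' t))).det = 0 := by
  refine Matrix.exists_vecMul_eq_zero_iff.mp ⟨1, one_ne_zero, funext fun t => ?_⟩
  change ∑ i, (1 : m → R) i * (c t * (v i ⬝ᵥ w (j t) * v i ⬝ᵥ w (j' t))) = 0
  simp only [Pi.one_apply, one_mul, ← Finset.mul_sum,
    sum_dotProduct_mul_dotProduct_of_orthonormal hv hw, Matrix.one_apply_ne (hj t), mul_zero]

end Matrix

theorem contraction_eq_sum_sum {m ι κ : Type*} [Fintype m] [Fintype ι] [Fintype κ]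
    (lam : ι → R) (mu : κ → R) (v : ι → m → R) (w : κ → m → R) (a b c d : m) :
    ∑ s, (∑ i, lam i * (v i a * v i b * v i s)) * (∑ j, mu j * (w j c * w j d * w j s)) =
      ∑ i, ∑ j, lam i * mu j * v i ⬝ᵥ w j * (v i a * v i b * w j c * w j d) := by
  simp only [Finset.sum_mul_sum]
  rw [Finset.sum_comm]
  refine Finset.sum_congr rfl fun i _ => ?_
  rw [Finset.sum_comm]
  refine Finset.sum_congr rfl fun j _ => ?_
  rw [dotProduct, Finset.mul_sum, Finset.sum_mul]
  exact Finset.sum_congr rfl fun s _ => by ring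

variable {n : ℕ} [NeZero n]

/-- The cyclic subtraction `t - 1` in `Fin n` realises the convention `k₀ = kₙ`. -/
def hPoly (P : Fin n → Fin n → Fin n → Fin n → R) : R :=
  ∑ k : Fin n → Fin n, ∑ σ : Equiv.Perm (Fin n), ∑ γ : Equiv.Perm (Fin n),
    ((Equiv.Perm.sign σ : ℤ) : R) * ((Equiv.Perm.sign γ : ℤ) : R) *
      ∏ t : Fin n, P (k t) (σ t) (k (t - 1)) (γ t)

theorem sum_prod_cyclic_eq_prod_dotProduct (x z : Fin n → Fin n → R) :
    ∑ k : Fin n → Fin n, ∏ t, x t (k t) * z t (k (t - 1)) = ∏ t, x t ⬝ᵥ z (t + 1) := by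
  have shift (k : Fin n → Fin n) : ∏ t, z t (k (t - 1)) = ∏ t, z (t + 1) (k t) :=
    (Fintype.prod_equiv (Equiv.addRight 1) _ _ fun t => by simp).symm
  simp only [dotProduct, Finset.prod_univ_sum, Fintype.piFinset_univ, Finset.prod_mul_distrib,
    shift]

theorem hPoly_sum_rankOne {Q : Type*} [Fintype Q] (x y z u : Q → Fin n → R) :
    hPoly (fun a b c d => ∑ q, x q a * y q b * z q c * u q d) =
      ∑ f : Fin n → Q, (∏ t, x (f t) ⬝ᵥ z (f (t + 1))) *
        (Matrix.of fun b t => y (f t) b).det * (Matrix.of fun b t => u (f t) b).det := by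
  have split (f : Fin n → Q) (k : Fin n → Fin n) (σ γ : Equiv.Perm (Fin n)) :
      ∏ t, x (f t) (k t) * y (f t) (σ t) * z (f t) (k (t - 1)) * u (f t) (γ t) =
        (∏ t, x (f t) (k t) * z (f t) (k (t - 1))) * (∏ t, y (f t) (σ t)) *
          ∏ t, u (f t) (γ t) := by
    simp only [Finset.prod_mul_distrib]
    ring
  have term (f : Fin n → Q) :
      (∏ t, x (f t) ⬝ᵥ z (f (t + 1))) * (Matrix.of fun b t => y (f t) b).det *
          (Matrix.of fun b t => u (f t) b).det =
        ∑ k : Fin n → Fin n, ∑ σ : Equiv.Perm (Fin n), ∑ γ : Equiv.Perm (Fin n),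
          ((Equiv.Perm.sign σ : ℤ) : R) * ((Equiv.Perm.sign γ : ℤ) : R) *
            ((∏ t, x (f t) (k t) * z (f t) (k (t - 1))) * (∏ t, y (f t) (σ t)) *
              ∏ t, u (f t) (γ t)) := by
    rw [← sum_prod_cyclic_eq_prod_dotProduct (fun t => x (f t)) (fun t => z (f t)), Matrix.det_apply',
      Matrix.det_apply', Finset.sum_mul_sum, Finset.sum_mul_sum]
    refine Finset.sum_congr rfl fun k _ => ?_
    simp only [Finset.sum_mul]
    rw [Finset.sum_comm]
    refine Finset.sum_congr rfl fun σ _ => Finset.sum_congr rfl fun γ _ => ?_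
    simp only [Matrix.of_apply]
    ring
  simp only [hPoly, Finset.prod_univ_sum, Fintype.piFinset_univ, Finset.mul_sum, split, term]
  symm
  rw [Finset.sum_comm]
  refine Finset.sum_congr rfl fun k _ => ?_
  rw [Finset.sum_comm]
  refine Finset.sum_congr rfl fun σ _ => ?_
  rw [Finset.sum_comm]

theorem hPoly_sum_sum {I J : Type*} [Fintype I] [Fintype J] (C : I → J → R)
    (v : I → Fin n → R) (w : J → Fin n → R) :
    hPoly (fun a b c d => ∑ i, ∑ j, C i j * (v i a * v i b * w j c * w j d)) =
      ∑ j : Fin n → J, (Matrix.of fun b t => w (j t) b).det *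
        ((Matrix.of fun b i => v i b) *
          Matrix.of fun i t => C i (j t) * v i ⬝ᵥ w (j (t + 1))).det := by
  have rankOne : (fun a b c d => ∑ i, ∑ j, C i j * (v i a * v i b * w j c * w j d)) =
      fun a b c d => ∑ q : I × J, (C q.1 q.2 • v q.1) a * v q.1 b * w q.2 c * w q.2 d := by
    ext a b c d
    rw [Fintype.sum_prod_type]
    simp only [Pi.smul_apply, smul_eq_mul, mul_assoc]
  rw [rankOne, hPoly_sum_rankOne,
    ← (Equiv.arrowProdEquivProdArrow (Fin n) (fun _ => I) (fun _ => J)).symm.sum_comp,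
    Fintype.sum_prod_type_right]
  refine Finset.sum_congr rfl fun j _ => ?_
  rw [det_mul_eq_sum_prod_mul_det, Finset.mul_sum]
  refine Finset.sum_congr rfl fun i _ => ?_
  simp only [Equiv.arrowProdEquivProdArrow_symm_apply, smul_dotProduct, smul_eq_mul,
    Matrix.of_apply]
  ring

theorem hPoly_eq_zero_of_orthonormal [IsDomain R] (hn : 1 < n) (lam mu : Fin n → R)
    {v w : Fin n → Fin n → R} (hv : Matrix.of v * (Matrix.of v)ᵀ = 1)
    (hw : Matrix.of w * (Matrix.of w)ᵀ = 1) :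
    hPoly (fun a b c d => ∑ i, ∑ j,
      lam i * mu j * v i ⬝ᵥ w j * (v i a * v i b * w j c * w j d)) = 0 := by
  rw [hPoly_sum_sum]
  refine Finset.sum_eq_zero fun j _ => ?_
  by_cases hj : ∃ t, j t = j (t + 1)
  · obtain ⟨t, ht⟩ := hj
    have ht1 : t ≠ t + 1 :=
      left_ne_add.mpr (Fin.ne_of_val_ne (by simp [Nat.mod_eq_of_lt hn]))
    rw [Matrix.det_zero_of_column_eq ht1 fun b => by simp [ht], zero_mul]
  · push Not at hj
    have factor : (Matrix.of fun i t => lam i * mu (j t) * v i ⬝ᵥ w (j t) *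
          v i ⬝ᵥ w (j (t + 1))) =
        Matrix.diagonal lam *
          Matrix.of fun i t => mu (j t) * (v i ⬝ᵥ w (j t) * v i ⬝ᵥ w (j (t + 1))) := by
      ext i t
      simp only [Matrix.diagonal_mul, Matrix.of_apply]
      ring
    rw [factor, Matrix.det_mul, Matrix.det_mul,
      det_dotProduct_mul_dotProduct_eq_zero hv hw _ hj, mul_zero, mul_zero, mul_zero]

end SOT

/-- The degree-`n` polynomial `hₙ` vanishes on `SOT_{2,n}`: here the product over `t : Fin n`
of `P (k t) (σ t) (k (t-1)) (γ t)` (with cyclic `Fin n` subtraction, so the index before `t = 0`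
is `k (n-1)`, i.e. `k₀ = kₙ`) encodes `p_{k₁σ(1)kₙγ(1)} p_{k₂σ(2)k₁γ(2)} ⋯ p_{kₙσ(n)k_{n-1}γ(n)}`. -/
theorem hn_vanishes_on_SOT
    (n : ℕ) (hn : 2 ≤ n) (P : Fin n → Fin n → Fin n → Fin n → ℝ) (hP : InSOT2 n P) :
    ∑ k : Fin n → Fin n, ∑ σ : Equiv.Perm (Fin n), ∑ γ : Equiv.Perm (Fin n),
      ((Equiv.Perm.sign σ : ℤ) : ℝ) * ((Equiv.Perm.sign γ : ℤ) : ℝ) *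
        ∏ t : Fin n, P (k t) (σ t) (k (t - ⟨1, by omega⟩)) (γ t) = 0 := by
  obtain ⟨lam, mu, v, w, hv, hw, hP⟩ := hP
  have : NeZero n := ⟨by omega⟩
  have hP_sum : P = fun a b c d => ∑ i, ∑ j,
      lam i * mu j * v i ⬝ᵥ w j * (v i a * v i b * w j c * w j d) := by
    ext a b c d
    rw [hP, SOT.contraction_eq_sum_sum]
  rw [← Fin.one_eq_mk_of_lt hn, hP_sum]
  exact SOT.hPoly_eq_zero_of_orthonormal hn lam mu (Matrix.ext hv) (Matrix.ext hw)
end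

section
/- For n = 2, the polynomial h_2 does not belong to the ideal generated by 𝒫_2 ∪ 𝒬_2 in the polynomial ring ℝ[p_{ijkl} : i,j,k,l ∈ {1,2}] in 16 variables; nevertheless h_2 vanishes on SOT_{2,2}. -/
open Finset MvPolynomial

/-- The set `𝒫ₙ` of linear polynomials `p_{abcd} − p_{σ₁(a)σ₁(b)σ₂(c)σ₂(d)}` in the entries
of an `n×n×n×n` tensor, where `σ₁` permutes `{a,b}` and `σ₂` permutes `{c,d}`. -/
def Pset (n : ℕ) : Set (MvPolynomial (Fin n × Fin n × Fin n × Fin n) ℝ) :=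
  {f | ∃ a b c d : Fin n,
    f = X (a, b, c, d) - X (a, b, c, d) ∨
    f = X (a, b, c, d) - X (b, a, c, d) ∨
    f = X (a, b, c, d) - X (a, b, d, c) ∨
    f = X (a, b, c, d) - X (b, a, d, c)}

/-- The set `𝒬ₙ` of quadratic polynomials `g⁽¹⁾` and `g⁽²⁾` in the entries of an `n×n×n×n`
tensor. -/
def Qset (n : ℕ) : Set (MvPolynomial (Fin n × Fin n × Fin n × Fin n) ℝ) :=
  {g | ∃ a b c d e f : Fin n,
    g = ∑ t : Fin n, (X (a, b, e, t) * X (c, d, f, t) - X (a, b, f, t) * X (c, d, e, t)) ∨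
    g = ∑ t : Fin n, (X (e, t, a, b) * X (f, t, c, d) - X (f, t, a, b) * X (e, t, c, d))}

/-- The degree-`n` polynomial `hₙ`; the product over `t : Fin n` of `p_{kₜ σ(t) k_{t-1} γ(t)}`
uses cyclic `Fin n` subtraction, encoding the convention `k₀ = kₙ`. -/
noncomputable def hpoly (n : ℕ) [NeZero n] : MvPolynomial (Fin n × Fin n × Fin n × Fin n) ℝ :=
  ∑ k : Fin n → Fin n, ∑ σ : Equiv.Perm (Fin n), ∑ γ : Equiv.Perm (Fin n),
    (((Equiv.Perm.sign σ : ℤ) * (Equiv.Perm.sign γ : ℤ) : ℤ) :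
        MvPolynomial (Fin n × Fin n × Fin n × Fin n) ℝ) *
      ∏ t : Fin n, X (k t, σ t, k (t - 1), γ t)

private lemma sumPerm {M : Type*} [AddCommMonoid M] (f : Equiv.Perm (Fin 2) → M) :
    ∑ σ : Equiv.Perm (Fin 2), f σ = f 1 + f (Equiv.swap 0 1) := by
  rw [show (Finset.univ : Finset (Equiv.Perm (Fin 2))) = {1, Equiv.swap 0 1} from by decide,
    Finset.sum_pair (by decide)]

private lemma sumFun {M : Type*} [AddCommMonoid M] (f : (Fin 2 → Fin 2) → M) :
    ∑ k : Fin 2 → Fin 2, f k = f ![0,0] + (f ![0,1] + (f ![1,0] + f ![1,1])) := by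
  rw [show (Finset.univ : Finset (Fin 2 → Fin 2)) =
      {![0,0], ![0,1], ![1,0], ![1,1]} from by decide,
    Finset.sum_insert (by decide), Finset.sum_insert (by decide), Finset.sum_pair (by decide)]

private lemma eval_hpoly2 (φ : Fin 2 × Fin 2 × Fin 2 × Fin 2 → ℝ) :
    eval φ (hpoly 2) =
      2 * (φ (0,0,0,0) * φ (0,1,0,1) - φ (0,0,0,1) * φ (0,1,0,0)
       + φ (0,0,1,0) * φ (1,1,0,1) - φ (0,0,1,1) * φ (1,1,0,0)
       - φ (0,1,1,0) * φ (1,0,0,1) + φ (0,1,1,1) * φ (1,0,0,0)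
       + φ (1,0,1,0) * φ (1,1,1,1) - φ (1,0,1,1) * φ (1,1,1,0)) := by
  simp only [hpoly, sumFun, sumPerm, Fin.prod_univ_two, Equiv.Perm.sign_one,
    Equiv.Perm.sign_swap (show (0 : Fin 2) ≠ 1 from by decide),
    Equiv.Perm.one_apply, Equiv.swap_apply_left, Equiv.swap_apply_right,
    Matrix.cons_val_zero, Matrix.cons_val_one, Matrix.head_cons,
    show (0 : Fin 2) - 1 = 1 from by decide, show (1 : Fin 2) - 1 = 0 from by decide,
    Units.val_one, Units.val_neg, Int.cast_one, Int.cast_neg, mul_one, one_mul, neg_neg,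
    map_add, map_mul, map_sub, map_neg, map_one, eval_X, map_intCast]
  ring

/-- Indicator `uu x y = [x ≠ y]`, used to build the counterexample point. -/
noncomputable def uu (x y : Fin 2) : ℝ := if x = y then 0 else 1

private lemma uu_symm (x y : Fin 2) : uu x y = uu y x := by
  unfold uu; rcases eq_or_ne x y with h | h
  · rw [h]
  · rw [if_neg h, if_neg (Ne.symm h)]

/-- The counterexample point: `P₀(a,b,c,d) = [a ≠ b]·[c ≠ d]`. -/
noncomputable def phi0 : Fin 2 × Fin 2 × Fin 2 × Fin 2 → ℝ :=
  fun x => uu x.1 x.2.1 * uu x.2.2.1 x.2.2.2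

/-- For `n = 2`, the polynomial `h₂` does not lie in the ideal generated by `𝒫₂ ∪ 𝒬₂`,
yet it vanishes on `SOT_{2,2}`. -/
theorem h2_not_in_ideal_but_vanishes_on_SOT :
    hpoly 2 ∉ Ideal.span (Pset 2 ∪ Qset 2) ∧
    ∀ P : Fin 2 → Fin 2 → Fin 2 → Fin 2 → ℝ, InSOT2 2 P →
      MvPolynomial.eval (fun x => P x.1 x.2.1 x.2.2.1 x.2.2.2) (hpoly 2) = 0 := by
  constructor
  · intro hmem
    have hker : Ideal.span (Pset 2 ∪ Qset 2) ≤ RingHom.ker (eval phi0) := by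
      rw [Ideal.span_le]
      rintro g (⟨a, b, c, d, hg | hg | hg | hg⟩ | ⟨a, b, c, d, e, f, hg | hg⟩) <;> subst hg <;>
        simp only [SetLike.mem_coe, RingHom.mem_ker, map_sub, map_sum, map_mul, eval_X,
          map_add, Fin.sum_univ_two, phi0, uu_symm b a, uu_symm d c] <;> ring
    have key : eval phi0 (hpoly 2) = 0 := hker hmem
    rw [eval_hpoly2] at key
    norm_num [phi0, uu] at key
  · rintro P ⟨lam, mu, v, w, hv, hw, hP⟩
    rw [eval_hpoly2]
    simp only [hP, Fin.sum_univ_two]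
    have hv00 := hv 0 0
    have hv01 := hv 0 1
    have hw00 := hw 0 0
    have hw01 := hw 0 1
    norm_num [Fin.sum_univ_two] at hv00 hv01 hw00 hw01
    obtain ⟨D, hD⟩ : ∃ D : ℝ, D = v 0 0 * v 1 1 - v 0 1 * v 1 0 := ⟨_, rfl⟩
    obtain ⟨E, hE⟩ : ∃ E : ℝ, E = w 0 0 * w 1 1 - w 0 1 * w 1 0 := ⟨_, rfl⟩
    have hc : v 1 0 = -(v 0 1) * D := by
      rw [hD]; linear_combination (v 0 0) * hv01 - (v 1 0) * hv00
    have hd : v 1 1 = v 0 0 * D := by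
      rw [hD]; linear_combination (v 0 1) * hv01 - (v 1 1) * hv00
    have he : w 1 0 = -(w 0 1) * E := by
      rw [hE]; linear_combination (w 0 0) * hw01 - (w 1 0) * hw00
    have hf : w 1 1 = w 0 0 * E := by
      rw [hE]; linear_combination (w 0 1) * hw01 - (w 1 1) * hw00
    rw [hc, hd, he, hf]
    ring
end

section
/- For n = 3, the polynomial h_3 does not belong to the ideal generated by 𝒫_3 ∪ 𝒬_3 in the polynomial ring ℝ[p_{ijkl} : i,j,k,l ∈ {1,2,3}] in 81 variables; nevertheless h_3 vanishes on SOT_{2,3}. -/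
open Finset MvPolynomial

/-!
Write `P = ∑ᵢⱼ Mᵢⱼ (vᵢ ⊗ λᵢvᵢ) ⊗ (wⱼ ⊗ μⱼwⱼ)` with `M = V Wᵀ` orthogonal. Expanding `hₙ`
multilinearly, the sums over `σ` and `γ` become determinants of rows of `diag(λ) V` and
`diag(μ) W` picked by `i, j : Fin n → Fin n`, and the sum over `k` becomes `∏ₜ M_{iₜ, jₜ₊₁}`.
Summing next over `i` yields the determinant of the matrix with columns `M_{·,jₜ} ⊙ M_{·,jₜ₊₁}`.
Its column sums are inner products of columns of `M`, so it is singular unless some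
`jₜ = jₜ₊₁`, and then the determinant of rows of `diag(μ) W` has two equal rows. Hence `hₙ`
vanishes on `SOT_{2,n}` for every `n ≥ 2`.

On the other hand `p_{abcd} = δ_{ab} δ_{cd}` is a zero of `𝒫ₙ ∪ 𝒬ₙ`, while `hₙ` takes the
value `n! · sgn(t ↦ t - 1) ≠ 0` there.
-/

open Matrix Equiv

section Determinant

variable {m R : Type*} [Fintype m] [DecidableEq m] [CommRing R]

lemma sum_sign_mul_prod_eq_det (M : Matrix m m R) :
    ∑ σ : Perm m, ((Perm.sign σ : ℤ) : R) * ∏ t, M t (σ t) = M.det := by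
  rw [← det_transpose, det_apply']
  rfl

lemma sum_prod_mul_det_submatrix (G M : Matrix m m R) :
    ∑ i : m → m, (∏ t, G (i t) t) * (M.submatrix i id).det = G.det * M.det := by
  rw [← det_transpose G, ← det_mul, ← sum_sign_mul_prod_eq_det]
  simp_rw [← sum_sign_mul_prod_eq_det, submatrix_apply, id, Finset.mul_sum]
  rw [Finset.sum_comm]
  refine Finset.sum_congr rfl fun σ _ => ?_
  simp_rw [mul_apply, transpose_apply, Fintype.prod_sum, Finset.mul_sum]
  refine Finset.sum_congr rfl fun i _ => ?_
  rw [Finset.prod_mul_distrib]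
  ring

lemma mul_transpose_eq_one_of_orthonormal {V : Matrix m m R}
    (hV : ∀ i j, ∑ k, V i k * V j k = if i = j then 1 else 0) : V * Vᵀ = 1 := by
  ext i j
  simp [mul_apply, hV, one_apply]

end Determinant

lemma prod_one_apply {ι m R : Type*} [Fintype ι] [DecidableEq m] [CommRing R] (f g : ι → m) :
    ∏ t, (1 : Matrix m m R) (f t) (g t) = if f = g then 1 else 0 := by
  split_ifs with h
  · exact h ▸ Finset.prod_eq_one fun t _ => one_apply_eq (f t)
  · obtain ⟨t, ht⟩ := Function.ne_iff.mp h
    exact Finset.prod_eq_zero (Finset.mem_univ t) (one_apply_ne ht)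

section Expansion

variable {n : ℕ} [NeZero n]

lemma eval_hpoly (P : Fin n → Fin n → Fin n → Fin n → ℝ) :
    eval (fun x => P x.1 x.2.1 x.2.2.1 x.2.2.2) (hpoly n) =
      ∑ k : Fin n → Fin n, ∑ σ : Perm (Fin n), ∑ γ : Perm (Fin n),
        ((Perm.sign σ : ℤ) : ℝ) * (Perm.sign γ : ℤ) * ∏ t, P (k t) (σ t) (k (t - 1)) (γ t) := by
  simp only [hpoly, map_sum, map_mul, map_prod, eval_X, map_intCast, Int.cast_mul]

lemma sum_prod_cyclic_eq_prod_mul_transpose {ι κ : Type*} (A : Matrix ι (Fin n) ℝ)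
    (C : Matrix κ (Fin n) ℝ) (i : Fin n → ι) (j : Fin n → κ) :
    ∑ k : Fin n → Fin n, ∏ t, A (i t) (k t) * C (j t) (k (t - 1)) =
      ∏ t, (A * Cᵀ) (i t) (j (t + 1)) := by
  have hshift : ∀ k : Fin n → Fin n, ∏ t, C (j t) (k (t - 1)) = ∏ t, C (j (t + 1)) (k t) :=
    fun k => Fintype.prod_equiv (Equiv.subRight 1) _ _ fun t => by simp
  simp_rw [Finset.prod_mul_distrib, hshift, ← Finset.prod_mul_distrib, mul_apply,
    transpose_apply, Fintype.prod_sum]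

lemma eval_hpoly_of_eq_sum_rankOne {ι κ : Type*} [Fintype ι] [Fintype κ]
    (P : Fin n → Fin n → Fin n → Fin n → ℝ) (M : Matrix ι κ ℝ)
    (A B : Matrix ι (Fin n) ℝ) (C D : Matrix κ (Fin n) ℝ)
    (hP : ∀ a b c d, P a b c d = ∑ i, ∑ j, M i j * A i a * B i b * C j c * D j d) :
    eval (fun x => P x.1 x.2.1 x.2.2.1 x.2.2.2) (hpoly n) =
      ∑ i : Fin n → ι, ∑ j : Fin n → κ,
        (∏ t, M (i t) (j t) * (A * Cᵀ) (i t) (j (t + 1))) *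
          ((B.submatrix i id).det * (D.submatrix j id).det) := by
  simp_rw [eval_hpoly, hP, Fintype.prod_sum, Finset.prod_mul_distrib,
    ← sum_prod_cyclic_eq_prod_mul_transpose, ← sum_sign_mul_prod_eq_det, submatrix_apply, id,
    Finset.mul_sum, Finset.sum_mul]
  simp_rw [Finset.sum_comm (t := (univ : Finset (Fin n → κ))),
    Finset.sum_comm (t := (univ : Finset (Fin n → ι)))]
  refine Finset.sum_congr rfl fun i _ => Finset.sum_congr rfl fun j _ => ?_
  simp_rw [Finset.mul_sum, Finset.sum_comm (t := (univ : Finset (Fin n → Fin n)))]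
  refine Finset.sum_congr rfl fun k _ => ?_
  rw [Finset.sum_comm]
  refine Finset.sum_congr rfl fun γ _ => Finset.sum_congr rfl fun σ _ => ?_
  rw [Finset.prod_mul_distrib]
  ring

end Expansion

section SOT

variable {n : ℕ} {P : Fin n → Fin n → Fin n → Fin n → ℝ} {lam mu : Fin n → ℝ}
  {V W : Matrix (Fin n) (Fin n) ℝ}

/-- Either two consecutive `j t` coincide, giving two equal rows on the right, or the all-ones
vector is in the left kernel of the matrix on the left, whose column sums are inner products
of distinct columns of `M`. -/
lemma det_mul_det_submatrix_eq_zero {R κ : Type*} [CommRing R] [IsDomain R] [Fintype κ]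
    [DecidableEq κ] [NeZero n] (hn : 2 ≤ n) {M : Matrix (Fin n) κ R} (hM : Mᵀ * M = 1)
    (D : Matrix κ (Fin n) R) (j : Fin n → κ) :
    (of fun u t => M u (j t) * M u (j (t + 1))).det * (D.submatrix j id).det = 0 := by
  by_cases hj : ∃ t, j t = j (t + 1)
  · obtain ⟨t, ht⟩ := hj
    have hne : t ≠ t + 1 := fun h => by
      have h10 := congrArg Fin.val (left_eq_add.mp h)
      rw [Fin.val_one', Fin.val_zero, Nat.mod_eq_of_lt hn] at h10
      exact one_ne_zero h10
    exact mul_eq_zero_of_right _ (det_zero_of_row_eq hne (by ext; simp [ht]))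
  · simp only [not_exists] at hj
    refine mul_eq_zero_of_left (exists_vecMul_eq_zero_iff.mp ⟨1, one_ne_zero, ?_⟩) _
    ext t
    have hcol := congrFun (congrFun hM (j t)) (j (t + 1))
    simpa [vecMul, dotProduct, mul_apply, one_apply_ne (hj t)] using hcol

lemma eq_sum_rankOne_of_eq_contraction
    (hP : ∀ a b c d, P a b c d =
      ∑ s, (∑ i, lam i * (V i a * V i b * V i s)) * (∑ j, mu j * (W j c * W j d * W j s)))
    (a b c d : Fin n) :
    P a b c d = ∑ i, ∑ j, (V * Wᵀ) i j * V i a * (diagonal lam * V) i b *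
      W j c * (diagonal mu * W) j d := by
  simp_rw [hP, diagonal_mul, mul_apply, transpose_apply, Finset.sum_mul, Finset.mul_sum]
  rw [Finset.sum_comm]
  refine Finset.sum_congr rfl fun i _ => ?_
  rw [Finset.sum_comm]
  refine Finset.sum_congr rfl fun j _ => Finset.sum_congr rfl fun s _ => ?_
  ring

theorem eval_hpoly_eq_zero_of_eq_contraction [NeZero n] (hn : 2 ≤ n) (hV : V * Vᵀ = 1)
    (hW : W * Wᵀ = 1)
    (hP : ∀ a b c d, P a b c d =
      ∑ s, (∑ i, lam i * (V i a * V i b * V i s)) * (∑ j, mu j * (W j c * W j d * W j s))) :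
    eval (fun x => P x.1 x.2.1 x.2.2.1 x.2.2.2) (hpoly n) = 0 := by
  rw [eval_hpoly_of_eq_sum_rankOne P _ V _ W _ (eq_sum_rankOne_of_eq_contraction hP),
    Finset.sum_comm]
  set M := V * Wᵀ
  have hM : Mᵀ * M = 1 := by
    simp only [M, transpose_mul, transpose_transpose, Matrix.mul_assoc,
      ← Matrix.mul_assoc Vᵀ, mul_eq_one_comm.mp hV, Matrix.one_mul, hW]
  refine Finset.sum_eq_zero fun j _ => ?_
  have hsum_i := sum_prod_mul_det_submatrix (of fun u t => M u (j t) * M u (j (t + 1)))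
    (diagonal lam * V)
  simp only [of_apply] at hsum_i
  simp_rw [← mul_assoc, ← Finset.sum_mul]
  rw [hsum_i, mul_right_comm, det_mul_det_submatrix_eq_zero hn hM, zero_mul]

theorem eval_hpoly_eq_zero_of_inSOT2 [NeZero n] (hn : 2 ≤ n) (hP : InSOT2 n P) :
    eval (fun x => P x.1 x.2.1 x.2.2.1 x.2.2.2) (hpoly n) = 0 := by
  obtain ⟨lam, mu, v, w, hv, hw, hP⟩ := hP
  exact eval_hpoly_eq_zero_of_eq_contraction hn (mul_transpose_eq_one_of_orthonormal hv)
    (mul_transpose_eq_one_of_orthonormal hw) hP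

end SOT

section Witness

variable {n : ℕ}

lemma span_le_ker_eval_tensor_self {x : Matrix (Fin n) (Fin n) ℝ} (hx : x.IsSymm) :
    Ideal.span (Pset n ∪ Qset n) ≤
      RingHom.ker (eval fun q => x q.1 q.2.1 * x q.2.2.1 q.2.2.2) := by
  rw [Ideal.span_le]
  rintro f (⟨a, b, c, d, rfl | rfl | rfl | rfl⟩ | ⟨a, b, c, d, e, f, rfl | rfl⟩) <;>
    simp [hx.apply a b, hx.apply c d, mul_comm, mul_left_comm]

/-- Only `k = σ` and `γ = σ ∘ (· - 1)` contribute. -/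
lemma eval_hpoly_one_tensor_one [NeZero n] :
    eval (fun x => (1 : Matrix (Fin n) (Fin n) ℝ) x.1 x.2.1 *
        (1 : Matrix (Fin n) (Fin n) ℝ) x.2.2.1 x.2.2.2) (hpoly n) =
      n.factorial * (Perm.sign (Equiv.subRight (1 : Fin n)) : ℤ) := by
  have hcyc : ∀ σ γ : Perm (Fin n), (fun t => σ (t - 1)) = ⇑γ ↔ γ = σ * Equiv.subRight 1 :=
    fun σ γ => ⟨fun h => Equiv.ext fun t => (congrFun h t).symm, fun h => h ▸ rfl⟩
  rw [eval_hpoly fun a b c d =>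
    (1 : Matrix (Fin n) (Fin n) ℝ) a b * (1 : Matrix (Fin n) (Fin n) ℝ) c d]
  simp_rw [Finset.prod_mul_distrib, prod_one_apply]
  rw [Finset.sum_comm]
  calc _ = ∑ σ : Perm (Fin n),
        ((Perm.sign σ : ℤ) : ℝ) * (Perm.sign (σ * Equiv.subRight 1) : ℤ) := by
        refine Finset.sum_congr rfl fun σ _ => ?_
        rw [Fintype.sum_eq_single (⇑σ) fun k hk => by simp [hk]]
        simp [hcyc]
    _ = _ := by
        simp [Perm.sign_mul, ← mul_assoc, ← Int.cast_mul, ← Units.val_mul, Int.units_mul_self,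
          Fintype.card_perm]

theorem hpoly_not_mem_span [NeZero n] : hpoly n ∉ Ideal.span (Pset n ∪ Qset n) := by
  intro h
  have h0 := span_le_ker_eval_tensor_self isSymm_one h
  rw [RingHom.mem_ker, eval_hpoly_one_tensor_one] at h0
  simp [Nat.factorial_ne_zero] at h0

end Witness

/-- For `n = 3`, the polynomial `h₃` does not lie in the ideal generated by `𝒫₃ ∪ 𝒬₃`,
yet it vanishes on `SOT_{2,3}`. -/
theorem h3_not_in_ideal_but_vanishes_on_SOT :
    hpoly 3 ∉ Ideal.span (Pset 3 ∪ Qset 3) ∧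
    ∀ P : Fin 3 → Fin 3 → Fin 3 → Fin 3 → ℝ, InSOT2 3 P →
      MvPolynomial.eval (fun x => P x.1 x.2.1 x.2.2.1 x.2.2.2) (hpoly 3) = 0 :=
  ⟨hpoly_not_mem_span, fun _ hP => eval_hpoly_eq_zero_of_inSOT2 (by norm_num) hP⟩
end
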